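/- arXiv:1204.6578 — 3 statements merged into one kernel-verified Lean document; each statement's English description precedes it below -/
import Mathlib

section
/- Let K ⊆ ℝ^N be a nonempty convex open bounded set, l ∈ (0,1), λ > 0. Let (u₁, Ω₁) and (u₂, Ω₂) be two supersolutions for problem (P_E). Then Ω₁ ∩ Ω₂ is again a supersolution: every p-capacitary potential u of (Ω₁ ∩ Ω₂) \ closure(K) satisfies dist(x, {u = l}) ≥ λ for all x ∈ ∂(Ω₁ ∩ Ω₂). -/
open Metric Set Filter MeasureTheory Topology Bornology
open scoped RealInnerProductSpace ENNReal Pointwise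

noncomputable section

abbrev Euc (N : ℕ) := EuclideanSpace ℝ (Fin N)

variable {N : ℕ}

/-- `u` is weakly `p`-harmonic on the open set `U`: it is `C¹` on `U` and the weak form of
the `p`-Laplace equation holds against all smooth compactly supported test functions. -/
def WeaklyPHarmonicOn (p : ℝ) (u : Euc N → ℝ) (U : Set (Euc N)) : Prop :=
  ContDiffOn ℝ 1 u U ∧
    ∀ φ : Euc N → ℝ, ContDiff ℝ (⊤ : ℕ∞) φ → HasCompactSupport φ → tsupport φ ⊆ U →
      ∫ x in U, ‖gradient u x‖ ^ (p - 2) * ⟪gradient u x, gradient φ x⟫ = 0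

/-- `u` is a `p`-capacitary potential of the ring `Ω \ closure K`: continuous on `closure Ω`,
`0 ≤ u ≤ 1`, `u = 1` on `closure K`, `u = 0` outside `Ω`, weakly `p`-harmonic in the ring. -/
def IsCapPotential (p : ℝ) (K Ω : Set (Euc N)) (u : Euc N → ℝ) : Prop :=
  ContinuousOn u (closure Ω) ∧ (∀ x, 0 ≤ u x ∧ u x ≤ 1) ∧
    (∀ x ∈ closure K, u x = 1) ∧ (∀ x ∉ Ω, u x = 0) ∧
    WeaklyPHarmonicOn p u (Ω \ closure K)


/-!
Both `u₁` and `u₂` dominate `u`: on the ring `(Ω₁ ∩ Ω₂) \ closure K` all three are weakly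
`p`-harmonic and `u ≤ uᵢ` holds off the ring, so the weak comparison principle applies. A point
`x ∈ ∂(Ω₁ ∩ Ω₂)` lies on `∂Ω₁` or on `∂Ω₂`, say on `∂Ω₁`, where `u₁ x = 0`. If `u y = l` then
`u₁ y ≥ l`, so `u₁ = l` somewhere on the segment `[x, y]`, at distance at most `dist x y` from `x`.
-/

section PLaplacianField

variable {E : Type*} [NormedAddCommGroup E] [InnerProductSpace ℝ E] {p : ℝ}

def pLapField (p : ℝ) (ξ : E) : E := ‖ξ‖ ^ (p - 2) • ξ

lemma rpow_sub_two_mul_self {a : ℝ} (ha : 0 ≤ a) (hp : p ≠ 1) : a ^ (p - 2) * a = a ^ (p - 1) := by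
  rw [show p - 1 = (p - 2) + 1 by ring, Real.rpow_add' ha (by contrapose! hp; linarith),
    Real.rpow_one]

lemma norm_pLapField (hp : p ≠ 1) (ξ : E) : ‖pLapField p ξ‖ = ‖ξ‖ ^ (p - 1) := by
  rw [pLapField, norm_smul, Real.norm_of_nonneg (by positivity),
    rpow_sub_two_mul_self (norm_nonneg ξ) hp]

lemma continuous_pLapField (hp : 1 < p) : Continuous (pLapField (E := E) p) := by
  refine continuous_iff_continuousAt.2 fun ξ => ?_
  rcases eq_or_ne ξ 0 with rfl | hξ
  · have hnorm : Tendsto (fun η : E => ‖η‖ ^ (p - 1)) (𝓝 0) (𝓝 0) := by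
      have := (tendsto_norm_zero (E := E)).rpow_const (p := p - 1) (Or.inr (sub_pos.2 hp).le)
      rwa [Real.zero_rpow (sub_pos.2 hp).ne'] at this
    rw [ContinuousAt, show pLapField p (0 : E) = 0 by simp [pLapField],
      tendsto_zero_iff_norm_tendsto_zero]
    simpa only [norm_pLapField hp.ne'] using hnorm
  · exact (continuous_norm.continuousAt.rpow_const (Or.inl (norm_ne_zero_iff.2 hξ))).smul
      continuousAt_id

lemma inner_pLapField_sub_eq (hp : p ≠ 1) (ξ η : E) :
    ⟪pLapField p ξ - pLapField p η, ξ - η⟫ =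
      (‖ξ‖ ^ (p - 1) - ‖η‖ ^ (p - 1)) * (‖ξ‖ - ‖η‖) +
        (‖ξ‖ ^ (p - 2) + ‖η‖ ^ (p - 2)) * (‖ξ‖ * ‖η‖ - ⟪ξ, η⟫) := by
  simp only [pLapField, inner_sub_left, inner_sub_right, real_inner_smul_left,
    real_inner_self_eq_norm_mul_norm, real_inner_comm ξ η]
  rw [← rpow_sub_two_mul_self (norm_nonneg ξ) hp, ← rpow_sub_two_mul_self (norm_nonneg η) hp]
  ring

lemma inner_pLapField_sub_terms_nonneg (hp : 1 < p) (ξ η : E) :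
    0 ≤ (‖ξ‖ ^ (p - 1) - ‖η‖ ^ (p - 1)) * (‖ξ‖ - ‖η‖) ∧
      0 ≤ (‖ξ‖ ^ (p - 2) + ‖η‖ ^ (p - 2)) * (‖ξ‖ * ‖η‖ - ⟪ξ, η⟫) := by
  refine ⟨?_, mul_nonneg (by positivity) (sub_nonneg.2 (real_inner_le_norm ξ η))⟩
  rcases le_total ‖ξ‖ ‖η‖ with h | h
  · exact mul_nonneg_of_nonpos_of_nonpos
      (sub_nonpos.2 (Real.rpow_le_rpow (norm_nonneg _) h (by linarith))) (sub_nonpos.2 h)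
  · exact mul_nonneg (sub_nonneg.2 (Real.rpow_le_rpow (norm_nonneg _) h (by linarith)))
      (sub_nonneg.2 h)

lemma inner_pLapField_sub_nonneg (hp : 1 < p) (ξ η : E) :
    0 ≤ ⟪pLapField p ξ - pLapField p η, ξ - η⟫ := by
  obtain ⟨h₁, h₂⟩ := inner_pLapField_sub_terms_nonneg hp ξ η
  rw [inner_pLapField_sub_eq hp.ne']
  exact add_nonneg h₁ h₂

lemma eq_of_inner_pLapField_sub_eq_zero (hp : 1 < p) {ξ η : E}
    (h : ⟪pLapField p ξ - pLapField p η, ξ - η⟫ = 0) : ξ = η := by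
  obtain ⟨h₁, h₂⟩ := inner_pLapField_sub_terms_nonneg hp ξ η
  rw [inner_pLapField_sub_eq hp.ne'] at h
  have hnorm : ‖ξ‖ = ‖η‖ := by
    by_contra hne
    have hrpow : ‖ξ‖ ^ (p - 1) ≠ ‖η‖ ^ (p - 1) := fun heq => hne <|
      (Real.rpow_left_injOn (sub_pos.2 hp).ne').eq_iff (norm_nonneg ξ) (norm_nonneg η) |>.1 heq
    have := mul_ne_zero (sub_ne_zero.2 hrpow) (sub_ne_zero.2 hne)
    exact this (by linarith)
  rcases eq_or_ne ‖ξ‖ 0 with h0 | h0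
  · rw [norm_eq_zero.1 h0, norm_eq_zero.1 (hnorm ▸ h0 : ‖η‖ = 0)]
  have hinner : ⟪ξ, η⟫ = ‖ξ‖ * ‖η‖ := by
    have hpos : 0 < ‖ξ‖ ^ (p - 2) + ‖η‖ ^ (p - 2) := by
      have := Real.rpow_pos_of_pos ((norm_nonneg ξ).lt_of_ne' h0) (p - 2)
      positivity
    nlinarith
  have := inner_eq_norm_mul_iff_real.1 hinner
  rw [hnorm] at this
  exact smul_right_injective E (hnorm ▸ h0) this

variable [CompleteSpace E]

lemma fderiv_apply_pLapField (f : E → ℝ) (z ξ : E) :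
    fderiv ℝ f z (pLapField p ξ) = ‖ξ‖ ^ (p - 2) * ⟪ξ, gradient f z⟫ := by
  rw [← inner_gradient_left, real_inner_comm, pLapField, real_inner_smul_left]

lemma continuousOn_pLapField_gradient (hp : 1 < p) {U : Set E} (hU : IsOpen U) {u : E → ℝ}
    (hu : ContDiffOn ℝ 1 u U) :
    ContinuousOn (fun z => pLapField p (gradient u z)) U :=
  (continuous_pLapField hp).comp_continuousOn
    ((InnerProductSpace.toDual ℝ E).symm.continuous.comp_continuousOn
      (hu.continuousOn_fderiv_of_isOpen hU le_rfl))

end PLaplacianField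

lemma continuous_of_continuousOn_closure_of_eq_zero {X M : Type*} [TopologicalSpace X]
    [TopologicalSpace M] [Zero M] {Ω : Set X} (hΩ : IsOpen Ω) {u : X → M}
    (hu : ContinuousOn u (closure Ω)) (h0 : ∀ x ∉ Ω, u x = 0) : Continuous u := by
  classical
  have hpiece : Ω.piecewise u 0 = u := by
    ext x
    by_cases hx : x ∈ Ω <;> simp [hx, h0]
  rw [← hpiece]
  refine continuous_piecewise (fun x hx => h0 x ?_) hu continuousOn_const
  exact (hΩ.frontier_eq ▸ hx).2

lemma nonpos_of_hasFDerivAt_zero_of_pos {E : Type*} [NormedAddCommGroup E] [NormedSpace ℝ E]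
    {g : E → ℝ} (hg : Continuous g) (hderiv : ∀ z, 0 < g z → HasFDerivAt g (0 : E →L[ℝ] ℝ) z)
    {z₀ : E} (hz₀ : g z₀ ≤ 0) (z : E) : g z ≤ 0 := by
  by_contra! hz
  have hopen : IsOpen ({y | 0 < g y} ∩ g ⁻¹' {g z}) :=
    (isOpen_lt continuous_const hg).isOpen_inter_preimage_of_fderiv_eq_zero
      (fun y hy => (hderiv y hy).differentiableAt.differentiableWithinAt)
      (fun y hy => (hderiv y hy).fderiv) _
  have hlevel : {y | 0 < g y} ∩ g ⁻¹' {g z} = g ⁻¹' {g z} := by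
    ext y
    simp only [mem_inter_iff, mem_ofPred_eq, mem_preimage, mem_singleton_iff, and_iff_right_iff_imp]
    exact fun hy => hy ▸ hz
  have hclopen : IsClopen (g ⁻¹' {g z}) := ⟨isClosed_singleton.preimage hg, hlevel ▸ hopen⟩
  have : z₀ ∈ g ⁻¹' {g z} := hclopen.eq_univ ⟨z, rfl⟩ ▸ mem_univ z₀
  linarith [show g z₀ = g z from this]

lemma infDist_levelSet_le_of_le {E : Type*} [NormedAddCommGroup E] [NormedSpace ℝ E]
    {u w : E → ℝ} {l : ℝ} (hw : Continuous w) (hle : ∀ y, u y ≤ w y) {x : E} (hwx : w x ≤ l)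
    (hne : {y | u y = l}.Nonempty) : infDist x {y | w y = l} ≤ infDist x {y | u y = l} := by
  by_contra! hlt
  obtain ⟨y, hy, hxy⟩ := (infDist_lt_iff hne).1 hlt
  obtain ⟨z, hz, hwz⟩ := (convex_segment x y).isPreconnected.intermediate_value
    (left_mem_segment ℝ x y) (right_mem_segment ℝ x y) hw.continuousOn
    ⟨hwx, (hy : u y = l) ▸ hle y⟩
  have hxz : dist x z ≤ dist x y := by
    rw [← dist_add_dist_of_mem_segment hz]
    exact le_add_of_nonneg_right dist_nonneg
  linarith [infDist_le_dist_of_mem (x := x) (show z ∈ {y | w y = l} from hwz)]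

lemma hasDerivAt_sq_max_zero (t : ℝ) : HasDerivAt (fun s : ℝ => max s 0 ^ 2) (2 * max t 0) t := by
  rcases lt_trichotomy t 0 with h | rfl | h
  · have hev : (fun s : ℝ => max s 0 ^ 2) =ᶠ[𝓝 t] fun _ => 0 := by
      filter_upwards [Iio_mem_nhds h] with s (hs : s < 0)
      simp [hs.le]
    simpa [max_eq_right h.le] using (hasDerivAt_const t (0 : ℝ)).congr_of_eventuallyEq hev
  · rw [hasDerivAt_iff_tendsto_slope]
    have hslope : slope (fun s : ℝ => max s 0 ^ 2) 0 =ᶠ[𝓝[≠] 0] fun s => max s 0 := by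
      filter_upwards [self_mem_nhdsWithin] with s (hs : s ≠ 0)
      rw [slope_def_field]
      rcases le_total s 0 with h | h <;> simp [h]
      field_simp
    simpa using (((continuous_id.max continuous_const).tendsto (0 : ℝ)).mono_left
      nhdsWithin_le_nhds).congr' hslope.symm
  · have hev : (fun s : ℝ => max s 0 ^ 2) =ᶠ[𝓝 t] fun s => s ^ 2 := by
      filter_upwards [Ioi_mem_nhds h] with s (hs : 0 < s)
      simp [hs.le]
    simpa [max_eq_left h.le] using (hasDerivAt_pow 2 t).congr_of_eventuallyEq hev

lemma contDiff_sq_max_zero : ContDiff ℝ 1 (fun t : ℝ => max t 0 ^ 2) := by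
  rw [contDiff_one_iff_deriv]
  refine ⟨fun t => (hasDerivAt_sq_max_zero t).differentiableAt, ?_⟩
  rw [funext fun t => (hasDerivAt_sq_max_zero t).deriv]
  exact continuous_const.mul (continuous_id.max continuous_const)

namespace ContDiffBump

open ContinuousLinearMap
open scoped Convolution

variable {E : Type*} [NormedAddCommGroup E] [NormedSpace ℝ E] [HasContDiffBump E]
  [MeasurableSpace E] [BorelSpace E] [FiniteDimensional ℝ E] {μ : Measure E} [μ.IsAddHaarMeasure]
  (ρ : ContDiffBump (0 : E))

lemma norm_normed_convolution_le {F : Type*} [NormedAddCommGroup F] [NormedSpace ℝ F]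
    [CompleteSpace F] {f : E → F} (hf : AEStronglyMeasurable f μ) {C : ℝ} (hC : ∀ y, ‖f y‖ ≤ C)
    (z : E) : ‖(ρ.normed μ ⋆[lsmul ℝ ℝ, μ] f) z‖ ≤ C := by
  simpa using dist_convolution_le (z₀ := (0 : F)) ((norm_nonneg _).trans (hC z))
    ρ.support_normed_eq.subset ρ.nonneg_normed ρ.integral_normed hf fun y _ => by simpa using hC y

lemma tsupport_normed_convolution_subset {F : Type*} [NormedAddCommGroup F] [NormedSpace ℝ F]
    (f : E → F) : tsupport (ρ.normed μ ⋆[lsmul ℝ ℝ, μ] f) ⊆ cthickening ρ.rOut (tsupport f) := by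
  refine closure_minimal ?_ isClosed_cthickening
  calc Function.support (ρ.normed μ ⋆[lsmul ℝ ℝ, μ] f)
      ⊆ Function.support (ρ.normed μ) + Function.support f := support_convolution_subset _
    _ ⊆ ball 0 ρ.rOut + tsupport f := by
      rw [ρ.support_normed_eq]; exact add_subset_add_left (subset_tsupport f)
    _ = thickening ρ.rOut (tsupport f) := ball_add_zero _ _
    _ ⊆ cthickening ρ.rOut (tsupport f) := thickening_subset_cthickening _ _

variable {v : E → ℝ}

lemma fderiv_normed_convolution (hv : ContDiff ℝ 1 v) (hvc : HasCompactSupport v) (z : E) :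
    fderiv ℝ (ρ.normed μ ⋆[lsmul ℝ ℝ, μ] v) z =
      (ρ.normed μ ⋆[(lsmul ℝ ℝ : ℝ →L[ℝ] (E →L[ℝ] ℝ) →L[ℝ] E →L[ℝ] ℝ), μ] fderiv ℝ v) z := by
  rw [(hvc.hasFDerivAt_convolution_right _ ρ.integrable_normed.locallyIntegrable hv z).fderiv]
  congr 1

lemma norm_fderiv_normed_convolution_le (hv : ContDiff ℝ 1 v) (hvc : HasCompactSupport v)
    {C : ℝ} (hC : ∀ y, ‖fderiv ℝ v y‖ ≤ C) (z : E) :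
    ‖fderiv ℝ (ρ.normed μ ⋆[lsmul ℝ ℝ, μ] v) z‖ ≤ C := by
  rw [fderiv_normed_convolution ρ hv hvc]
  exact ρ.norm_normed_convolution_le
    (hv.continuous_fderiv one_ne_zero).aestronglyMeasurable hC z

lemma tendsto_fderiv_normed_convolution {ρ : ℕ → ContDiffBump (0 : E)}
    (hρ : Tendsto (fun n => (ρ n).rOut) atTop (𝓝 0)) (hv : ContDiff ℝ 1 v)
    (hvc : HasCompactSupport v) (z : E) :
    Tendsto (fun n => fderiv ℝ ((ρ n).normed μ ⋆[lsmul ℝ ℝ, μ] v) z) atTop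
      (𝓝 (fderiv ℝ v z)) := by
  simp only [fderiv_normed_convolution _ hv hvc]
  exact convolution_tendsto_right_of_continuous hρ (hv.continuous_fderiv one_ne_zero) z

end ContDiffBump

lemma eqOn_zero_of_setIntegral_eq_zero {X : Type*} [TopologicalSpace X] [MeasurableSpace X]
    [OpensMeasurableSpace X] {μ : Measure X} [μ.IsOpenPosMeasure] {U : Set X} (hU : IsOpen U)
    {F : X → ℝ} (hF : ContinuousOn F U) (hFi : IntegrableOn F U μ) (hnn : ∀ x ∈ U, 0 ≤ F x)
    (h0 : ∫ x in U, F x ∂μ = 0) : EqOn F 0 U := by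
  have hae : F =ᵐ[μ.restrict U] 0 :=
    (integral_eq_zero_iff_of_nonneg_ae ((ae_restrict_iff' hU.measurableSet).2
      (Eventually.of_forall hnn)) hFi).1 h0
  exact Measure.eqOn_open_of_ae_eq hae hU hF continuousOn_const

lemma contDiff_sq_max_zero_comp {E : Type*} [NormedAddCommGroup E] [NormedSpace ℝ E]
    {U : Set E} (hU : IsOpen U) {g : E → ℝ} (hg : Continuous g) (hgU : ContDiffOn ℝ 1 g U)
    (hneg : ∀ z ∉ U, g z < 0) : ContDiff ℝ 1 (fun z => max (g z) 0 ^ 2) := by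
  refine contDiff_iff_contDiffAt.2 fun z => ?_
  by_cases hz : z ∈ U
  · exact contDiff_sq_max_zero.contDiffAt.comp z (hgU.contDiffAt (hU.mem_nhds hz))
  · refine contDiffAt_const (c := (0 : ℝ)).congr_of_eventuallyEq ?_
    filter_upwards [(isOpen_lt hg continuous_const).mem_nhds (hneg z hz)] with y (hy : g y < 0)
    simp [hy.le]

section WeakFormulation

open ContinuousLinearMap
open scoped Convolution

variable {p : ℝ} {U V : Set (Euc N)} {u w : Euc N → ℝ}

lemma WeaklyPHarmonicOn.mono (hu : WeaklyPHarmonicOn p u V) (hV : IsOpen V) (hUV : U ⊆ V) :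
    WeaklyPHarmonicOn p u U := by
  refine ⟨hu.1.mono hUV, fun φ hφ hφc hφU => ?_⟩
  rw [← setIntegral_eq_of_subset_of_forall_sdiff_eq_zero hV.measurableSet hUV]
  · exact hu.2 φ hφ hφc (hφU.trans hUV)
  · intro z hz
    rw [show gradient φ z = 0 by simp [gradient, fderiv_of_notMem_tsupport ℝ fun h => hz.2 (hφU h)]]
    simp

lemma integrableOn_fderiv_apply_pLapField (hp : 1 < p) (hU : IsOpen U)
    (hu : ContDiffOn ℝ 1 u U) {v : Euc N → ℝ} (hv : ContDiff ℝ 1 v) (hvc : HasCompactSupport v)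
    (hvU : tsupport v ⊆ U) :
    IntegrableOn (fun z => fderiv ℝ v z (pLapField p (gradient u z))) U := by
  have hcont : ContinuousOn (fun z => fderiv ℝ v z (pLapField p (gradient u z))) U :=
    (hv.continuous_fderiv one_ne_zero).continuousOn.clm_apply
      (continuousOn_pLapField_gradient hp hU hu)
  refine ((hcont.mono hvU).integrableOn_compact hvc).of_forall_sdiff_eq_zero hU.measurableSet ?_
  intro z hz
  simp [fderiv_of_notMem_tsupport ℝ hz.2]

/-- Mollify `v` and pass to the limit by dominated convergence. -/
theorem WeaklyPHarmonicOn.integral_fderiv_apply_pLapField_eq_zero (hp : 1 < p) (hU : IsOpen U)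
    (hu : WeaklyPHarmonicOn p u U) {v : Euc N → ℝ} (hv : ContDiff ℝ 1 v)
    (hvc : HasCompactSupport v) (hvU : tsupport v ⊆ U) :
    ∫ z in U, fderiv ℝ v z (pLapField p (gradient u z)) = 0 := by
  set A : Euc N → Euc N := fun z => pLapField p (gradient u z)
  have hA : ContinuousOn A U := continuousOn_pLapField_gradient hp hU hu.1
  obtain ⟨δ, hδ, hδU⟩ := hvc.isCompact.exists_thickening_subset_open hU hvU
  set K := cthickening (δ / 2) (tsupport v)
  have hK : IsCompact K := hvc.isCompact.cthickening
  have hKU : K ⊆ U := (cthickening_subset_thickening' hδ (by linarith) _).trans hδU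
  set ρ : ℕ → ContDiffBump (0 : Euc N) := fun n =>
    ⟨δ / 2 / (n + 1) / 2, δ / 2 / (n + 1), by positivity, half_lt_self (by positivity)⟩
  have hρ : Tendsto (fun n => (ρ n).rOut) atTop (𝓝 0) := by
    show Tendsto (fun n : ℕ => δ / 2 / (n + 1)) atTop (𝓝 0)
    simpa [div_eq_mul_one_div (δ / 2)] using
      (tendsto_one_div_add_atTop_nhds_zero_nat (𝕜 := ℝ)).const_mul (δ / 2)
  set φ : ℕ → Euc N → ℝ := fun n => (ρ n).normed volume ⋆[lsmul ℝ ℝ, volume] v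
  have hφK : ∀ n, tsupport (φ n) ⊆ K := fun n =>
    ((ρ n).tsupport_normed_convolution_subset v).trans <| cthickening_mono
      (div_le_self (by positivity) (by simp)) _
  have hφ : ∀ n, ContDiff ℝ (⊤ : ℕ∞) (φ n) := fun n =>
    (ρ n).hasCompactSupport_normed.contDiff_convolution_left _ (ρ n).contDiff_normed
      hv.continuous.locallyIntegrable
  have hφc : ∀ n, HasCompactSupport (φ n) := fun n =>
    (ρ n).hasCompactSupport_normed.convolution _ hvc
  have hweak : ∀ n, ∫ z in U, fderiv ℝ (φ n) z (A z) = 0 := fun n => by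
    rw [← hu.2 (φ n) (hφ n) (hφc n) ((hφK n).trans hKU)]
    exact setIntegral_congr_fun hU.measurableSet fun z _ => fderiv_apply_pLapField _ _ _
  obtain ⟨C, hC⟩ := (hvc.fderiv ℝ).exists_bound_of_continuous (hv.continuous_fderiv one_ne_zero)
  have hbound : ∀ n, ∀ z, ‖fderiv ℝ (φ n) z (A z)‖ ≤ K.indicator (fun z => C * ‖A z‖) z := by
    intro n z
    by_cases hz : z ∈ K
    · rw [indicator_of_mem hz]
      exact ((fderiv ℝ (φ n) z).le_opNorm _).trans <| mul_le_mul_of_nonneg_right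
        ((ρ n).norm_fderiv_normed_convolution_le hv hvc hC z) (norm_nonneg _)
    · simp [indicator_of_notMem hz, fderiv_of_notMem_tsupport ℝ fun h => hz (hφK n h)]
  have hbound_int : Integrable (K.indicator fun z => C * ‖A z‖) (volume.restrict U) :=
    ((continuousOn_const.mul (hA.mono hKU).norm).integrableOn_compact hK
      |>.integrable_indicator hK.measurableSet).restrict
  have hlim := tendsto_integral_of_dominated_convergence _
    (fun n => (((hφ n).continuous_fderiv (by simp)).continuousOn.clm_apply hA).aestronglyMeasurable
      hU.measurableSet) hbound_int (fun n => Eventually.of_forall (hbound n))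
    (Eventually.of_forall fun z =>
      ((ContinuousLinearMap.apply ℝ ℝ (A z)).continuous.tendsto _).comp
        (ContDiffBump.tendsto_fderiv_normed_convolution hρ hv hvc z))
  simp only [hweak] at hlim
  exact tendsto_nhds_unique hlim tendsto_const_nhds

end WeakFormulation

section Comparison

variable {p : ℝ} {U : Set (Euc N)} {u w : Euc N → ℝ}

/-- Testing both equations with `v = ((u - w - c)⁺)²` gives
`∫ 2 (u - w - c)⁺ ⟪A(∇u) - A(∇w), ∇u - ∇w⟫ = 0` for the `p`-Laplacian field `A`; the integrand is
nonnegative and continuous, so it vanishes, and strict monotonicity of `A` does the rest. -/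
theorem WeaklyPHarmonicOn.gradient_eq_of_lt_sub (hp : 1 < p) (hU : IsOpen U)
    (hu : WeaklyPHarmonicOn p u U) (hw : WeaklyPHarmonicOn p w U)
    (huw : Continuous fun z => u z - w z) {c : ℝ} (hcpt : IsCompact {z | c ≤ u z - w z})
    (hcU : {z | c ≤ u z - w z} ⊆ U) {z : Euc N} (hz : c < u z - w z) :
    gradient u z = gradient w z := by
  set g : Euc N → ℝ := fun z => u z - w z - c
  have hg : Continuous g := huw.sub continuous_const
  have hgU : ContDiffOn ℝ 1 g U := (hu.1.sub hw.1).sub contDiffOn_const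
  set v : Euc N → ℝ := fun z => max (g z) 0 ^ 2
  have hv : ContDiff ℝ 1 v := contDiff_sq_max_zero_comp hU hg hgU fun y hy => by
    by_contra! h
    exact hy (hcU (show c ≤ u y - w y by simp only [g] at h; linarith))
  have hvS : tsupport v ⊆ {z | c ≤ u z - w z} := by
    refine closure_minimal (fun y hy => ?_) (isClosed_le continuous_const huw)
    by_contra h
    have h' : u y - w y < c := not_le.1 h
    exact hy (by simp [v, g, show u y - w y - c ≤ 0 by linarith])
  have hvc : HasCompactSupport v := hcpt.of_isClosed_subset (isClosed_tsupport v) hvS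
  set F : Euc N → ℝ := fun z =>
    fderiv ℝ v z (pLapField p (gradient u z)) - fderiv ℝ v z (pLapField p (gradient w z))
  have hFu := integrableOn_fderiv_apply_pLapField hp hU hu.1 hv hvc (hvS.trans hcU)
  have hFw := integrableOn_fderiv_apply_pLapField hp hU hw.1 hv hvc (hvS.trans hcU)
  have hF : ∀ y ∈ U, F y = 2 * max (g y) 0 *
      ⟪pLapField p (gradient u y) - pLapField p (gradient w y), gradient u y - gradient w y⟫ := by
    intro y hy
    have hDu := (hu.1.differentiableOn one_ne_zero y hy).differentiableAt (hU.mem_nhds hy)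
    have hDw := (hw.1.differentiableOn one_ne_zero y hy).differentiableAt (hU.mem_nhds hy)
    have hDv : HasFDerivAt v ((2 * max (g y) 0) • (fderiv ℝ u y - fderiv ℝ w y)) y :=
      (hasDerivAt_sq_max_zero (g y)).comp_hasFDerivAt y
        ((hDu.hasFDerivAt.sub hDw.hasFDerivAt).sub_const c)
    simp only [F]
    rw [← map_sub, hDv.fderiv, smul_apply, smul_eq_mul, sub_apply, ← inner_gradient_left,
      ← inner_gradient_left, ← inner_sub_left, real_inner_comm]
  have hF0 : EqOn F 0 U := by
    refine eqOn_zero_of_setIntegral_eq_zero hU ?_ (hFu.sub hFw) (fun y hy => ?_) ?_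
    · have hDv := (hv.continuous_fderiv one_ne_zero).continuousOn (s := U)
      exact (hDv.clm_apply (continuousOn_pLapField_gradient hp hU hu.1)).sub
        (hDv.clm_apply (continuousOn_pLapField_gradient hp hU hw.1))
    · rw [hF y hy]
      exact mul_nonneg (by positivity) (inner_pLapField_sub_nonneg hp _ _)
    · rw [integral_sub hFu hFw, hu.integral_fderiv_apply_pLapField_eq_zero hp hU hv hvc
        (hvS.trans hcU), hw.integral_fderiv_apply_pLapField_eq_zero hp hU hv hvc (hvS.trans hcU),
        sub_zero]
  have hzU : z ∈ U := hcU hz.le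
  have hgz : 0 < 2 * max (g z) 0 := by simp only [g]; positivity
  refine eq_of_inner_pLapField_sub_eq_zero hp ?_
  have := hF0 hzU
  rw [hF z hzU, Pi.zero_apply] at this
  exact (mul_eq_zero.1 this).resolve_left hgz.ne'

theorem WeaklyPHarmonicOn.le_of_forall_notMem_le (hp : 1 < p) (hU : IsOpen U)
    (hUb : IsBounded U) (hUc : ∃ z, z ∉ U) (hu : Continuous u) (hw : Continuous w)
    (hpu : WeaklyPHarmonicOn p u U) (hpw : WeaklyPHarmonicOn p w U)
    (hle : ∀ z ∉ U, u z ≤ w z) (x : Euc N) : u x ≤ w x := by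
  refine le_of_forall_pos_le_add fun ε hε => ?_
  have hlevel : {z | ε ≤ u z - w z} ⊆ U := fun z hz => by
    by_contra h
    linarith [hle z h, show ε ≤ u z - w z from hz]
  have hcpt : IsCompact {z | ε ≤ u z - w z} :=
    isCompact_of_isClosed_isBounded (isClosed_le continuous_const (hu.sub hw)) (hUb.subset hlevel)
  have hderiv : ∀ z, 0 < u z - w z - ε →
      HasFDerivAt (fun z => u z - w z - ε) (0 : Euc N →L[ℝ] ℝ) z := by
    intro z hz
    have hzU : z ∈ U := hlevel (by simp only [mem_ofPred_eq]; linarith)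
    have hgrad := hpu.gradient_eq_of_lt_sub hp hU hpw (hu.sub hw) hcpt hlevel (by linarith)
    have hDu := (hpu.1.differentiableOn one_ne_zero z hzU).differentiableAt (hU.mem_nhds hzU)
    have hDw := (hpw.1.differentiableOn one_ne_zero z hzU).differentiableAt (hU.mem_nhds hzU)
    have hD := (hDu.hasFDerivAt.sub hDw.hasFDerivAt).sub_const ε
    rwa [← toDual_gradient, hgrad, toDual_gradient, sub_self] at hD
  obtain ⟨z₀, hz₀⟩ := hUc
  have := nonpos_of_hasFDerivAt_zero_of_pos (g := fun z => u z - w z - ε)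
    ((hu.sub hw).sub continuous_const) hderiv (by linarith [hle z₀ hz₀]) x
  linarith

end Comparison

namespace IsCapPotential

variable {p l : ℝ} {K Ω Ω' : Set (Euc N)} {u u' : Euc N → ℝ}

lemma continuous (hu : IsCapPotential p K Ω u) (hΩ : IsOpen Ω) : Continuous u :=
  continuous_of_continuousOn_closure_of_eq_zero hΩ hu.1 hu.2.2.2.1

lemma le_of_subset (hp : 1 < p) (hΩ : IsOpen Ω) (hΩb : IsBounded Ω) (hΩ' : IsOpen Ω')
    (hsub : Ω' ⊆ Ω) (hΩc : ∃ x, x ∉ Ω) (hu : IsCapPotential p K Ω u)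
    (hu' : IsCapPotential p K Ω' u') (x : Euc N) : u' x ≤ u x := by
  refine WeaklyPHarmonicOn.le_of_forall_notMem_le hp (hΩ'.sdiff isClosed_closure)
    (hΩb.subset (sdiff_subset.trans hsub)) (hΩc.imp fun x hx h => hx (hsub h.1))
    (hu'.continuous hΩ') (hu.continuous hΩ) hu'.2.2.2.2
    (hu.2.2.2.2.mono (hΩ.sdiff isClosed_closure) (sdiff_subset_sdiff_left hsub)) (fun z hz => ?_) x
  by_cases hzK : z ∈ closure K
  · rw [hu'.2.2.1 z hzK, hu.2.2.1 z hzK]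
  · rw [hu'.2.2.2.1 z fun h => hz ⟨h, hzK⟩]
    exact (hu.2.1 z).1

lemma infDist_levelSet_le_of_subset (hp : 1 < p) (hΩ : IsOpen Ω) (hΩb : IsBounded Ω)
    (hΩ' : IsOpen Ω') (hsub : Ω' ⊆ Ω) (hK : K.Nonempty) (hl : l ∈ Icc 0 1)
    (hu : IsCapPotential p K Ω u) (hu' : IsCapPotential p K Ω' u') {x : Euc N}
    (hx : x ∈ frontier Ω) : infDist x {y | u y = l} ≤ infDist x {y | u' y = l} := by
  have hxΩ : x ∉ Ω := (hΩ.frontier_eq ▸ hx).2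
  obtain ⟨k, hk⟩ := hK
  have hlevel : {y | u' y = l}.Nonempty := by
    have hu'x : u' x = 0 := hu'.2.2.2.1 x fun h => hxΩ (hsub h)
    have hu'k : u' k = 1 := hu'.2.2.1 k (subset_closure hk)
    obtain ⟨y, hy⟩ := intermediate_value_univ x k (hu'.continuous hΩ') (hu'x ▸ hu'k ▸ hl)
    exact ⟨y, hy⟩
  exact infDist_levelSet_le_of_le (hu.continuous hΩ)
    (hu.le_of_subset hp hΩ hΩb hΩ' hsub ⟨x, hxΩ⟩ hu') ((hu.2.2.2.1 x hxΩ).trans_le hl.1) hlevel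

end IsCapPotential

theorem supersolution_intersection_general
    (N : ℕ) (p : ℝ) (hp : 1 < p)
    (K : Set (Euc N)) (hKne : K.Nonempty)
    (l lam : ℝ) (hl : l ∈ Set.Ioo (0 : ℝ) 1)
    (Ω₁ Ω₂ : Set (Euc N)) (u₁ u₂ : Euc N → ℝ)
    (h₁open : IsOpen Ω₁) (h₁bdd : IsBounded Ω₁)
    (h₁pot : IsCapPotential p K Ω₁ u₁)
    (h₁super : ∀ x ∈ frontier Ω₁, lam ≤ infDist x {y | u₁ y = l})
    (h₂open : IsOpen Ω₂) (h₂bdd : IsBounded Ω₂)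
    (h₂pot : IsCapPotential p K Ω₂ u₂)
    (h₂super : ∀ x ∈ frontier Ω₂, lam ≤ infDist x {y | u₂ y = l}) :
    ∀ u : Euc N → ℝ, IsCapPotential p K (Ω₁ ∩ Ω₂) u →
      ∀ x ∈ frontier (Ω₁ ∩ Ω₂), lam ≤ infDist x {y | u y = l} := by
  intro u hu x hx
  have hΩ : IsOpen (Ω₁ ∩ Ω₂) := h₁open.inter h₂open
  have hl' : l ∈ Icc 0 1 := Ioo_subset_Icc_self hl
  rcases frontier_inter_subset Ω₁ Ω₂ hx with hx | hx
  · exact (h₁super x hx.1).trans (h₁pot.infDist_levelSet_le_of_subset hp h₁open h₁bdd hΩ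
      inter_subset_left hKne hl' hu hx.1)
  · exact (h₂super x hx.2).trans (h₂pot.infDist_levelSet_le_of_subset hp h₂open h₂bdd hΩ
      inter_subset_right hKne hl' hu hx.2)

/-- The class of supersolutions for `(P_E)` is closed under intersection. -/
theorem supersolution_intersection
    (N : ℕ) (hN : 2 ≤ N) (p : ℝ) (hp : 1 < p)
    (K : Set (Euc N)) (hKne : K.Nonempty) (hKconv : Convex ℝ K) (hKopen : IsOpen K)
    (hKbdd : IsBounded K) (l lam : ℝ) (hl : l ∈ Set.Ioo (0 : ℝ) 1) (hlam : 0 < lam)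
    (Ω₁ Ω₂ : Set (Euc N)) (u₁ u₂ : Euc N → ℝ)
    (h₁conv : Convex ℝ Ω₁) (h₁open : IsOpen Ω₁) (h₁bdd : IsBounded Ω₁)
    (h₁K : closure K ⊆ Ω₁) (h₁pot : IsCapPotential p K Ω₁ u₁)
    (h₁super : ∀ x ∈ frontier Ω₁, lam ≤ infDist x {y | u₁ y = l})
    (h₂conv : Convex ℝ Ω₂) (h₂open : IsOpen Ω₂) (h₂bdd : IsBounded Ω₂)
    (h₂K : closure K ⊆ Ω₂) (h₂pot : IsCapPotential p K Ω₂ u₂)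
    (h₂super : ∀ x ∈ frontier Ω₂, lam ≤ infDist x {y | u₂ y = l}) :
    ∀ u : Euc N → ℝ, IsCapPotential p K (Ω₁ ∩ Ω₂) u →
      ∀ x ∈ frontier (Ω₁ ∩ Ω₂), lam ≤ infDist x {y | u y = l} :=
  supersolution_intersection_general N p hp K hKne l lam hl Ω₁ Ω₂ u₁ u₂ h₁open h₁bdd h₁pot h₁super
    h₂open h₂bdd h₂pot h₂super
end
end

section
/- Let N ≥ 2 be an integer and p ∈ (1,∞) with p ≠ N; set γ := (p−N)/(p−1). Let R > 0, l ∈ (0,1), and define Λ : (0,R) → ℝ by Λ(r) := ((1−l)·r^γ + l·R^γ)^{1/γ} − r. Then: (i) Λ(r) + r ≤ R for all r ∈ (0,R); (ii) setting r_max := R·(l/((1−l)^{(N−p)/(N−1)} − (1−l)))^{(p−1)/(p−N)}, one has 0 < r_max < R, Λ is strictly increasing on (0, r_max] and strictly decreasing on [r_max, R); (iii) Λ(r) → 0 as r → R⁻; as r → 0⁺, Λ(r) → l^{(p−1)/(p−N)}·R if p > N and Λ(r) → 0 if p < N; and (iv) the maximum value is Λ(r_max) = R·[(l/(1 − (1−l)^{(p−1)/(N−1)}))^{(p−1)/(p−N)}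 − (l/((1−l)^{(N−p)/(N−1)} − (1−l)))^{(p−1)/(p−N)}]. -/
/-!
Put `γ = (p - N) / (p - 1)`, so that `γ ≠ 0` and `γ < 1`. Then `r + Λ(r) = M(r)` is the weighted
`γ`-power mean of `r` and `R`, so `M(r) < M(R) = R` for `r < R`, and `Λ(R) = 0`. Comparisons of
`γ`-th powers are made independent of the sign of `γ` by multiplying them by `γ`.

The ratio `M(r) / r = (1 - l + l (R / r) ^ γ) ^ (1 / γ)` is strictly decreasing, and
`Λ'(r) = (1 - l) (M(r) / r) ^ (1 - γ) - 1` with `1 - γ > 0`. So `Λ'` is strictly decreasing and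
vanishes where `M(r) / r = κ := (1 - l) ^ (-1 / (1 - γ))`, which is `r_max`. As `κ > 1 = M(R) / R`,
`r_max < R`, and the maximum is `(κ - 1) r_max`. At `0`, `r ^ γ` tends to `0` if `γ > 0` and to `∞`
if `γ < 0`.
-/

open Set Filter Topology

noncomputable section

/-- Distance from the inner sphere of radius `r` to the `l`-level set of the
`p`-capacitary potential of the annulus `B_R \ B_r` (case `p ≠ N`), where
`γ = (p − N)/(p − 1)`. -/
def Lam9 (N : ℕ) (p R l r : ℝ) : ℝ :=
  ((1 - l) * r ^ ((p - N) / (p - 1)) + l * R ^ ((p - N) / (p - 1))) ^ ((p - 1) / (p - N)) - r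

/-- The radius at which `Lam9` attains its maximum. -/
def rmax9 (N : ℕ) (p R l : ℝ) : ℝ :=
  R * (l / ((1 - l) ^ (((N : ℝ) - p) / ((N : ℝ) - 1)) - (1 - l))) ^ ((p - 1) / (p - N))

theorem Real.mul_rpow_lt_mul_rpow_iff {γ x y : ℝ} (hγ : γ ≠ 0) (hx : 0 < x) (hy : 0 < y) :
    γ * x ^ γ < γ * y ^ γ ↔ x < y := by
  rcases hγ.lt_or_gt with hγ | hγ
  · rw [mul_lt_mul_left_of_neg hγ, Real.rpow_lt_rpow_iff_of_neg hy hx hγ]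
  · rw [mul_lt_mul_iff_right₀ hγ, Real.rpow_lt_rpow_iff hx.le hy.le hγ]

theorem Real.rpow_inv_lt_rpow_inv_iff {γ u v : ℝ} (hγ : γ ≠ 0) (hu : 0 < u) (hv : 0 < v) :
    u ^ γ⁻¹ < v ^ γ⁻¹ ↔ γ * u < γ * v := by
  rw [← Real.mul_rpow_lt_mul_rpow_iff hγ (by positivity) (by positivity),
    Real.rpow_inv_rpow hu.le hγ, Real.rpow_inv_rpow hv.le hγ]

/-- The level set `{u_r = l}` is the sphere of this radius, the `γ`-power mean of `r` and `R` with
weights `1 - l` and `l`. -/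
def levelRadius (γ l R r : ℝ) : ℝ := ((1 - l) * r ^ γ + l * R ^ γ) ^ γ⁻¹

def levelDistance (γ l R r : ℝ) : ℝ := levelRadius γ l R r - r

/-- The value of `levelRadius γ l R r / r` at which the derivative of `levelDistance γ l R`
vanishes. -/
def criticalRatio (γ l : ℝ) : ℝ := (1 - l) ^ (-(1 - γ)⁻¹)

def criticalRadius (γ l R : ℝ) : ℝ := R * (l / (criticalRatio γ l ^ γ - (1 - l))) ^ γ⁻¹

section

variable {γ l R r : ℝ}

theorem levelRadius_self (hγ : γ ≠ 0) (hR : 0 ≤ R) : levelRadius γ l R R = R := by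
  rw [levelRadius, ← add_mul, sub_add_cancel, one_mul, Real.rpow_rpow_inv hR hγ]

theorem one_sub_mul_rpow_add_mul_rpow_pos (hl : l ∈ Ioo 0 1) (hR : 0 < R) (hr : 0 < r) :
    0 < (1 - l) * r ^ γ + l * R ^ γ :=
  add_pos (mul_pos (sub_pos.2 hl.2) (Real.rpow_pos_of_pos hr γ))
    (mul_pos hl.1 (Real.rpow_pos_of_pos hR γ))

theorem levelRadius_pos (hl : l ∈ Ioo 0 1) (hR : 0 < R) (hr : 0 < r) :
    0 < levelRadius γ l R r :=
  Real.rpow_pos_of_pos (one_sub_mul_rpow_add_mul_rpow_pos hl hR hr) _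

theorem levelRadius_lt (hγ : γ ≠ 0) (hl : l ∈ Ioo 0 1) (hr : 0 < r) (hrR : r < R) :
    levelRadius γ l R r < R := by
  have hR := hr.trans hrR
  have hF := one_sub_mul_rpow_add_mul_rpow_pos (γ := γ) hl hR hr
  rw [← Real.mul_rpow_lt_mul_rpow_iff hγ (levelRadius_pos hl hR hr) hR, levelRadius,
    Real.rpow_inv_rpow hF.le hγ]
  have := (Real.mul_rpow_lt_mul_rpow_iff hγ hr hR).2 hrR
  nlinarith [sub_pos.2 hl.2]

theorem levelRadius_div_self (hγ : γ ≠ 0) (hl : l ∈ Ioo 0 1) (hR : 0 < R) (hr : 0 < r) :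
    levelRadius γ l R r / r = (1 - l + l * (R / r) ^ γ) ^ γ⁻¹ := by
  have hF := one_sub_mul_rpow_add_mul_rpow_pos (γ := γ) hl hR hr
  have hrγ := Real.rpow_pos_of_pos hr γ
  calc levelRadius γ l R r / r
      = levelRadius γ l R r / (r ^ γ) ^ γ⁻¹ := by rw [Real.rpow_rpow_inv hr.le hγ]
    _ = (((1 - l) * r ^ γ + l * R ^ γ) / r ^ γ) ^ γ⁻¹ := by
      rw [levelRadius, Real.div_rpow hF.le hrγ.le]
    _ = (1 - l + l * (R / r) ^ γ) ^ γ⁻¹ := by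
      rw [Real.div_rpow hR.le hr.le]
      field_simp

theorem strictAntiOn_levelRadius_div_self (hγ : γ ≠ 0) (hl : l ∈ Ioo 0 1) (hR : 0 < R) :
    StrictAntiOn (fun r => levelRadius γ l R r / r) (Ioi 0) := by
  intro x hx y hy hxy
  dsimp only
  have hbase : ∀ z ∈ Ioi (0 : ℝ), 0 < 1 - l + l * (R / z) ^ γ := fun z hz =>
    add_pos (sub_pos.2 hl.2) (mul_pos hl.1 (Real.rpow_pos_of_pos (div_pos hR hz) _))
  rw [levelRadius_div_self hγ hl hR hx, levelRadius_div_self hγ hl hR hy,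
    Real.rpow_inv_lt_rpow_inv_iff hγ (hbase y hy) (hbase x hx)]
  have := (Real.mul_rpow_lt_mul_rpow_iff hγ (div_pos hR hy) (div_pos hR hx)).2
    (div_lt_div_of_pos_left hR hx hxy)
  nlinarith [hl.1]

theorem one_lt_criticalRatio (hγ1 : γ < 1) (hl : l ∈ Ioo 0 1) : 1 < criticalRatio γ l :=
  Real.one_lt_rpow_of_pos_of_lt_one_of_neg (sub_pos.2 hl.2) (by linarith [hl.1])
    (neg_neg_of_pos (inv_pos.2 (sub_pos.2 hγ1)))

theorem criticalRatio_rpow (hl : l < 1) :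
    criticalRatio γ l ^ γ = (1 - l) ^ (-γ / (1 - γ)) := by
  rw [criticalRatio, ← Real.rpow_mul (sub_nonneg.2 hl.le)]
  ring_nf

theorem criticalRatio_rpow_sub_pos (hγ1 : γ < 1) (hl : l ∈ Ioo 0 1) :
    0 < criticalRatio γ l ^ γ - (1 - l) := by
  have h := Real.rpow_lt_rpow_of_exponent_gt (sub_pos.2 hl.2) (by linarith [hl.1])
    ((div_lt_one (sub_pos.2 hγ1)).2 (by linarith) : -γ / (1 - γ) < 1)
  rw [Real.rpow_one] at h
  rw [criticalRatio_rpow hl.2]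
  linarith

theorem mul_criticalRatio_rpow_one_sub (hγ1 : γ < 1) (hl : l < 1) :
    (1 - l) * criticalRatio γ l ^ (1 - γ) = 1 := by
  rw [criticalRatio, ← Real.rpow_mul (sub_nonneg.2 hl.le), neg_mul,
    inv_mul_cancel₀ (sub_pos.2 hγ1).ne', Real.rpow_neg_one, mul_inv_cancel₀ (sub_pos.2 hl).ne']

theorem criticalRadius_pos (hγ1 : γ < 1) (hl : l ∈ Ioo 0 1) (hR : 0 < R) :
    0 < criticalRadius γ l R :=
  mul_pos hR (Real.rpow_pos_of_pos (div_pos hl.1 (criticalRatio_rpow_sub_pos hγ1 hl)) _)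

theorem levelRadius_criticalRadius_div (hγ : γ ≠ 0) (hγ1 : γ < 1) (hl : l ∈ Ioo 0 1)
    (hR : 0 < R) :
    levelRadius γ l R (criticalRadius γ l R) / criticalRadius γ l R = criticalRatio γ l := by
  have hD := criticalRatio_rpow_sub_pos hγ1 hl
  have hq : 0 ≤ l / (criticalRatio γ l ^ γ - (1 - l)) := (div_pos hl.1 hD).le
  have hRρ : (R / criticalRadius γ l R) ^ γ = (criticalRatio γ l ^ γ - (1 - l)) / l := by
    rw [criticalRadius, div_mul_cancel_left₀ hR.ne', Real.inv_rpow (Real.rpow_nonneg hq _),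
      Real.rpow_inv_rpow hq hγ, inv_div]
  rw [levelRadius_div_self hγ hl hR (criticalRadius_pos hγ1 hl hR), hRρ,
    mul_div_cancel₀ _ hl.1.ne', add_sub_cancel,
    Real.rpow_rpow_inv (zero_le_one.trans (one_lt_criticalRatio hγ1 hl).le) hγ]

theorem criticalRadius_lt (hγ : γ ≠ 0) (hγ1 : γ < 1) (hl : l ∈ Ioo 0 1) (hR : 0 < R) :
    criticalRadius γ l R < R := by
  rw [← (strictAntiOn_levelRadius_div_self hγ hl hR).lt_iff_gt
    (mem_Ioi.2 hR) (criticalRadius_pos hγ1 hl hR)]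
  simp only [levelRadius_criticalRadius_div hγ hγ1 hl hR, levelRadius_self hγ hR.le,
    div_self hR.ne']
  exact one_lt_criticalRatio hγ1 hl

theorem hasDerivAt_levelRadius (hγ : γ ≠ 0) (hl : l ∈ Ioo 0 1) (hR : 0 < R) (hr : 0 < r) :
    HasDerivAt (levelRadius γ l R) ((1 - l) * (levelRadius γ l R r / r) ^ (1 - γ)) r := by
  have hF := one_sub_mul_rpow_add_mul_rpow_pos (γ := γ) hl hR hr
  have hM := levelRadius_pos (γ := γ) hl hR hr
  have hbase : HasDerivAt (fun x => (1 - l) * x ^ γ + l * R ^ γ)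
      ((1 - l) * (γ * r ^ (γ - 1))) r :=
    ((Real.hasDerivAt_rpow_const (Or.inl hr.ne')).const_mul _).add_const _
  refine ((Real.hasDerivAt_rpow_const (p := γ⁻¹) (Or.inl hF.ne')).comp r hbase).congr_deriv ?_
  rw [Real.div_rpow hM.le hr.le, levelRadius, ← Real.rpow_mul hF.le,
    show γ⁻¹ * (1 - γ) = γ⁻¹ - 1 by field_simp, show γ - 1 = -(1 - γ) by ring,
    Real.rpow_neg hr.le]
  field_simp

theorem hasDerivAt_levelDistance (hγ : γ ≠ 0) (hl : l ∈ Ioo 0 1) (hR : 0 < R) (hr : 0 < r) :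
    HasDerivAt (levelDistance γ l R) ((1 - l) * (levelRadius γ l R r / r) ^ (1 - γ) - 1) r :=
  (hasDerivAt_levelRadius hγ hl hR hr).sub (hasDerivAt_id r)

theorem strictMonoOn_levelDistance (hγ : γ ≠ 0) (hγ1 : γ < 1) (hl : l ∈ Ioo 0 1)
    (hR : 0 < R) :
    StrictMonoOn (levelDistance γ l R) (Ioc 0 (criticalRadius γ l R)) := by
  refine strictMonoOn_of_deriv_pos (convex_Ioc _ _)
    (fun r hr => (hasDerivAt_levelDistance hγ hl hR hr.1).continuousAt.continuousWithinAt)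
    fun r hr => ?_
  rw [interior_Ioc] at hr
  rw [(hasDerivAt_levelDistance hγ hl hR hr.1).deriv, sub_pos]
  have hratio : criticalRatio γ l < levelRadius γ l R r / r := by
    rw [← levelRadius_criticalRadius_div hγ hγ1 hl hR]
    exact strictAntiOn_levelRadius_div_self hγ hl hR hr.1 (criticalRadius_pos hγ1 hl hR) hr.2
  calc 1 = (1 - l) * criticalRatio γ l ^ (1 - γ) :=
        (mul_criticalRatio_rpow_one_sub hγ1 hl.2).symm
    _ < (1 - l) * (levelRadius γ l R r / r) ^ (1 - γ) :=
      mul_lt_mul_of_pos_left (Real.rpow_lt_rpow (by linarith [one_lt_criticalRatio hγ1 hl])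
        hratio (sub_pos.2 hγ1)) (sub_pos.2 hl.2)

theorem strictAntiOn_levelDistance (hγ : γ ≠ 0) (hγ1 : γ < 1) (hl : l ∈ Ioo 0 1)
    (hR : 0 < R) :
    StrictAntiOn (levelDistance γ l R) (Ici (criticalRadius γ l R)) := by
  have hρ := criticalRadius_pos hγ1 hl hR
  refine strictAntiOn_of_deriv_neg (convex_Ici _)
    (fun r hr =>
      (hasDerivAt_levelDistance hγ hl hR (hρ.trans_le hr)).continuousAt.continuousWithinAt)
    fun r hr => ?_
  rw [interior_Ici] at hr
  have hr0 := hρ.trans hr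
  rw [(hasDerivAt_levelDistance hγ hl hR hr0).deriv, sub_neg]
  have hratio : levelRadius γ l R r / r < criticalRatio γ l := by
    rw [← levelRadius_criticalRadius_div hγ hγ1 hl hR]
    exact strictAntiOn_levelRadius_div_self hγ hl hR hρ hr0 hr
  calc (1 - l) * (levelRadius γ l R r / r) ^ (1 - γ)
        < (1 - l) * criticalRatio γ l ^ (1 - γ) :=
      mul_lt_mul_of_pos_left (Real.rpow_lt_rpow
        (div_pos (levelRadius_pos hl hR hr0) hr0).le hratio (sub_pos.2 hγ1)) (sub_pos.2 hl.2)
    _ = 1 := mul_criticalRatio_rpow_one_sub hγ1 hl.2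

theorem tendsto_levelDistance_nhdsLT (hγ : γ ≠ 0) (hl : l ∈ Ioo 0 1) (hR : 0 < R) :
    Tendsto (levelDistance γ l R) (𝓝[<] R) (𝓝 0) := by
  have hzero : levelDistance γ l R R = 0 := by
    rw [levelDistance, levelRadius_self hγ hR.le, sub_self]
  exact hzero ▸ (hasDerivAt_levelDistance hγ hl hR hR).continuousAt.tendsto.mono_left
    nhdsWithin_le_nhds

theorem tendsto_levelDistance_nhdsGT_zero_of_pos (hγ : 0 < γ) (hl : 0 ≤ l) (hR : 0 ≤ R) :
    Tendsto (levelDistance γ l R) (𝓝[>] 0) (𝓝 (l ^ γ⁻¹ * R)) := by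
  have hcont : ContinuousAt (levelRadius γ l R) 0 :=
    (Real.continuousAt_rpow_const _ _ (Or.inr (inv_pos.2 hγ).le)).comp
      (((Real.continuousAt_rpow_const _ _ (Or.inr hγ.le)).const_mul _).add continuousAt_const)
  have hvalue : levelRadius γ l R 0 - id 0 = l ^ γ⁻¹ * R := by
    rw [levelRadius, Real.zero_rpow hγ.ne', mul_zero, zero_add,
      Real.mul_rpow hl (Real.rpow_nonneg hR _), Real.rpow_rpow_inv hR hγ.ne', id, sub_zero]
  exact hvalue ▸ (hcont.sub continuousAt_id).tendsto.mono_left nhdsWithin_le_nhds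

theorem tendsto_levelDistance_nhdsGT_zero_of_neg (hγ : γ < 0) (hl : l < 1) :
    Tendsto (levelDistance γ l R) (𝓝[>] 0) (𝓝 0) := by
  have hbase : Tendsto (fun r => (1 - l) * r ^ γ + l * R ^ γ) (𝓝[>] 0) atTop :=
    tendsto_atTop_add_const_right _ _
      ((tendsto_rpow_neg_nhdsGT_zero hγ).const_mul_atTop (sub_pos.2 hl))
  have hpow : Tendsto (fun x : ℝ => x ^ γ⁻¹) atTop (𝓝 0) := by
    simpa using tendsto_rpow_neg_atTop (y := -γ⁻¹) (by simpa using hγ)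
  show Tendsto (fun r => ((1 - l) * r ^ γ + l * R ^ γ) ^ γ⁻¹ - r) _ _
  simpa using (hpow.comp hbase).sub (tendsto_nhdsWithin_of_tendsto_nhds
    (continuous_id.tendsto (0 : ℝ)))

theorem levelDistance_criticalRadius (hγ : γ ≠ 0) (hγ1 : γ < 1) (hl : l ∈ Ioo 0 1)
    (hR : 0 < R) :
    levelDistance γ l R (criticalRadius γ l R) =
      R * ((l / (1 - (1 - l) ^ (1 - γ)⁻¹)) ^ γ⁻¹ -
        (l / (criticalRatio γ l ^ γ - (1 - l))) ^ γ⁻¹) := by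
  have hρ := criticalRadius_pos hγ1 hl hR
  have hκ := one_lt_criticalRatio hγ1 hl
  have hD := criticalRatio_rpow_sub_pos hγ1 hl
  have hκγ : 0 < criticalRatio γ l ^ γ := Real.rpow_pos_of_pos (by linarith) _
  have he : (1 - l) ^ (1 - γ)⁻¹ * criticalRatio γ l ^ γ = 1 - l := by
    rw [criticalRatio_rpow hl.2, ← Real.rpow_add (sub_pos.2 hl.2),
      show (1 - γ)⁻¹ + -γ / (1 - γ) = 1 by field_simp [(sub_pos.2 hγ1).ne']; ring,
      Real.rpow_one]
  have hvalue : criticalRatio γ l ^ γ * (l / (criticalRatio γ l ^ γ - (1 - l))) =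
      l / (1 - (1 - l) ^ (1 - γ)⁻¹) := by
    have ha : (1 - l) ^ (1 - γ)⁻¹ < 1 :=
      Real.rpow_lt_one (sub_pos.2 hl.2).le (by linarith [hl.1]) (inv_pos.2 (sub_pos.2 hγ1))
    rw [mul_div_assoc', div_eq_div_iff hD.ne' (sub_pos.2 ha).ne']
    linear_combination (-l) * he
  have hM :
      levelRadius γ l R (criticalRadius γ l R) = criticalRatio γ l * criticalRadius γ l R := by
    rw [← levelRadius_criticalRadius_div hγ hγ1 hl hR, div_mul_cancel₀ _ hρ.ne']
  rw [levelDistance, hM, criticalRadius, ← hvalue,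
    Real.mul_rpow hκγ.le (div_pos hl.1 hD).le, Real.rpow_rpow_inv (by linarith) hγ]
  ring

end

theorem annulus_distance_function_p_ne_N
    (N : ℕ) (hN : 2 ≤ N) (p : ℝ) (hp : 1 < p) (hpN : p ≠ (N : ℝ))
    (R l : ℝ) (hR : 0 < R) (hl : l ∈ Set.Ioo (0 : ℝ) 1) :
    (∀ r ∈ Set.Ioo (0 : ℝ) R, Lam9 N p R l r + r ≤ R) ∧
    (0 < rmax9 N p R l ∧ rmax9 N p R l < R ∧
      StrictMonoOn (Lam9 N p R l) (Set.Ioc 0 (rmax9 N p R l)) ∧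
      StrictAntiOn (Lam9 N p R l) (Set.Ico (rmax9 N p R l) R)) ∧
    (Tendsto (Lam9 N p R l) (𝓝[<] R) (𝓝 0) ∧
      ((N : ℝ) < p →
        Tendsto (Lam9 N p R l) (𝓝[>] 0) (𝓝 (l ^ ((p - 1) / (p - N)) * R))) ∧
      (p < (N : ℝ) → Tendsto (Lam9 N p R l) (𝓝[>] 0) (𝓝 0))) ∧
    Lam9 N p R l (rmax9 N p R l) =
      R * ((l / (1 - (1 - l) ^ ((p - 1) / ((N : ℝ) - 1)))) ^ ((p - 1) / (p - N)) -
        (l / ((1 - l) ^ (((N : ℝ) - p) / ((N : ℝ) - 1)) - (1 - l))) ^ ((p - 1) / (p - N))) := by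
  have hN1 : (1 : ℝ) < N := by exact_mod_cast hN
  have hp1 : 0 < p - 1 := sub_pos.2 hp
  set γ := (p - N) / (p - 1) with hγ
  have hγ0 : γ ≠ 0 := div_ne_zero (sub_ne_zero.2 hpN) hp1.ne'
  have hγ1 : γ < 1 := (div_lt_one hp1).2 (by linarith)
  have hinv : (p - 1) / (p - N) = γ⁻¹ := (inv_div _ _).symm
  have hsub : (p - 1) / ((N : ℝ) - 1) = (1 - γ)⁻¹ := by
    rw [hγ]; field_simp; ring_nf
  have hratio : (1 - l) ^ (((N : ℝ) - p) / ((N : ℝ) - 1)) = criticalRatio γ l ^ γ := by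
    rw [criticalRatio_rpow hl.2]; congr 1; rw [hγ]; field_simp; ring_nf
  have hΛ : Lam9 N p R l = levelDistance γ l R := by
    funext r; rw [Lam9, levelDistance, levelRadius, hinv]
  have hρ : rmax9 N p R l = criticalRadius γ l R := by
    rw [rmax9, criticalRadius, hratio, hinv]
  rw [hΛ, hρ, hinv, hsub, hratio]
  refine ⟨fun r hr => ?_, ⟨criticalRadius_pos hγ1 hl hR, criticalRadius_lt hγ0 hγ1 hl hR,
    strictMonoOn_levelDistance hγ0 hγ1 hl hR,
    (strictAntiOn_levelDistance hγ0 hγ1 hl hR).mono Ico_subset_Ici_self⟩,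
    ⟨tendsto_levelDistance_nhdsLT hγ0 hl hR, fun hNp => ?_, fun hpN' => ?_⟩,
    levelDistance_criticalRadius hγ0 hγ1 hl hR⟩
  · rw [levelDistance, sub_add_cancel]
    exact (levelRadius_lt hγ0 hl hr.1 hr.2).le
  · exact tendsto_levelDistance_nhdsGT_zero_of_pos (div_pos (sub_pos.2 hNp) hp1) hl.1.le hR.le
  · exact tendsto_levelDistance_nhdsGT_zero_of_neg
      (div_neg_of_neg_of_pos (sub_neg.2 hpN') hp1) hl.2
end
end

section
/- Let Ω ⊆ ℝ^N be a convex open bounded set, l ∈ (0,1), and ω > 0. Suppose there exist a convex open set D with closure(D) ⊆ Ω and an interior p-capacitary potential v of Ω \ closure(D) such that ‖∇v(x)‖ ≤ ω for all x ∈ Ω \ closure(D). Then dist(x, {v = l}) ≥ l/ω for every x ∈ ∂D; in particular D ∈ 𝓑_{l/ω} and the Bernoulli constant satisfies λ_{Ω,max} ≥ l/ω. -/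
/-!
Let `x ∈ ∂D` and let `y` be a point of `{v = l}` in `Ω`. On the segment `[x, y]` take the point
`w ∈ closure D` closest to `y`; the half-open segment `(w, y]` then lies in `Ω \ closure D`, where
`‖∇v‖ ≤ ω`, so the mean value inequality gives `l = v y - v w ≤ ω |y - w| ≤ ω |y - x|`.
A point `y` of `{v = l}` outside `Ω` is no closer to `x` than some point of `[x, y] ∩ Ω` where
`v = l`, which exists by the intermediate value theorem since `v x = 0` and `v = 1` on `∂Ω`;
such a point also shows that `{v = l}` is nonempty, so its `infDist` is not the junk value `0`.
-/

open Metric Set Filter MeasureTheory Topology Bornology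
open scoped RealInnerProductSpace ENNReal Pointwise

noncomputable section

variable {N : ℕ}

/-- interior `p`-capacitary potential of `Ω \ closure K`: continuous on `closure Ω`,
`0 ≤ u ≤ 1`, `u = 0` on `closure K`, `u = 1` on `∂Ω`, weakly `p`-harmonic in the ring. -/
def IsIntCapPotential (p : ℝ) (Ω K : Set (Euc N)) (u : Euc N → ℝ) : Prop :=
  ContinuousOn u (closure Ω) ∧ (∀ x, 0 ≤ u x ∧ u x ≤ 1) ∧
    (∀ x ∈ closure K, u x = 0) ∧ (∀ x ∈ frontier Ω, u x = 1) ∧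
    WeaklyPHarmonicOn p u (Ω \ closure K)

/-- The class `𝓑_λ` of supersolution cores for the interior problem `(P_I)` in `Ω`. -/
def BClass (p l lam : ℝ) (Ω : Set (Euc N)) : Set (Set (Euc N)) :=
  {K | Convex ℝ K ∧ IsOpen K ∧ closure K ⊆ Ω ∧
    ∃ u, IsIntCapPotential p Ω K u ∧
      ∀ x ∈ frontier K, lam ≤ infDist x {y | u y = l}}

/-- The Bernoulli constant `λ_{Ω,max} = sup {λ > 0 : 𝓑_λ ≠ ∅}`, computed in `[0,∞]`. -/
def bernoulliConst (p l : ℝ) (Ω : Set (Euc N)) : ℝ≥0∞ :=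
  sSup {t : ℝ≥0∞ | ∃ lam : ℝ, 0 < lam ∧ t = ENNReal.ofReal lam ∧ (BClass p l lam Ω).Nonempty}

theorem IsPreconnected.inter_frontier_nonempty {X : Type*} [TopologicalSpace X] {s t : Set X}
    (hs : IsPreconnected s) (hst : (s ∩ t).Nonempty) (hst' : (s \ t).Nonempty) :
    (s ∩ frontier t).Nonempty := by
  by_contra h
  have hcover : s ⊆ interior t ∪ (closure t)ᶜ := fun z hz => by
    by_cases hzc : z ∈ closure t
    · exact .inl (by_contra fun hzi => h ⟨z, hz, hzc, hzi⟩)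
    · exact .inr hzc
  obtain ⟨z, hzs, hzt⟩ := hst
  have hzi : z ∈ interior t := (hcover hzs).resolve_right (not_not.2 (subset_closure hzt))
  have hsub := hs.subset_left_of_subset_union isOpen_interior isClosed_closure.isOpen_compl
    (disjoint_compl_right.mono_left interior_subset_closure) hcover ⟨z, hzs, hzi⟩
  obtain ⟨y, hys, hyt⟩ := hst'
  exact hyt (interior_subset (hsub hys))

theorem nontrivial_of_mem_frontier {X : Type*} [TopologicalSpace X] {s : Set X} {x : X}
    (hx : x ∈ frontier s) : Nontrivial X := by
  by_contra h
  rw [not_nontrivial_iff_subsingleton] at h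
  have hs : s = univ := Subsingleton.eq_univ_of_nonempty (closure_nonempty_iff.mp ⟨x, hx.1⟩)
  simp [hs] at hx

section NormedSpace

variable {E : Type*} [NormedAddCommGroup E] [NormedSpace ℝ E]

theorem sub_le_mul_dist_of_norm_fderiv_le_openSegment {f : E → ℝ} {a b : E} {C : ℝ}
    (hcont : ContinuousOn f (segment ℝ a b))
    (hdiff : ∀ z ∈ openSegment ℝ a b, DifferentiableAt ℝ f z)
    (hbound : ∀ z ∈ openSegment ℝ a b, ‖fderiv ℝ f z‖ ≤ C) :
    f b - f a ≤ C * dist a b := by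
  set g : ℝ → ℝ := fun t => f (AffineMap.lineMap a b t)
  have hint : interior (Icc (0 : ℝ) 1) = Ioo 0 1 := interior_Icc
  have hmem : ∀ t ∈ Ioo (0 : ℝ) 1, AffineMap.lineMap a b t ∈ openSegment ℝ a b := fun t ht =>
    openSegment_eq_image_lineMap ℝ a b ▸ mem_image_of_mem _ ht
  have hderiv : ∀ t ∈ Ioo (0 : ℝ) 1,
      HasDerivAt g (fderiv ℝ f (AffineMap.lineMap a b t) (b - a)) t := fun t ht =>
    (hdiff _ (hmem t ht)).hasFDerivAt.comp_hasDerivAt t AffineMap.hasDerivAt_lineMap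
  have hslope : ∀ t ∈ interior (Icc (0 : ℝ) 1), deriv g t ≤ C * dist a b := by
    rw [hint]
    intro t ht
    rw [(hderiv t ht).deriv, dist_comm, dist_eq_norm]
    calc _ ≤ ‖fderiv ℝ f (AffineMap.lineMap a b t) (b - a)‖ := Real.le_norm_self _
      _ ≤ ‖fderiv ℝ f (AffineMap.lineMap a b t)‖ * ‖b - a‖ := ContinuousLinearMap.le_opNorm _ _
      _ ≤ C * ‖b - a‖ := by gcongr; exact hbound _ (hmem t ht)
  have hg : ContinuousOn g (Icc 0 1) := hcont.comp AffineMap.lineMap_continuous.continuousOn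
    (segment_eq_image_lineMap ℝ a b ▸ mapsTo_image _ _)
  have hgd : DifferentiableOn ℝ g (interior (Icc 0 1)) := fun t ht =>
    (hderiv t (hint ▸ ht)).differentiableAt.differentiableWithinAt
  simpa [g] using (convex_Icc (0 : ℝ) 1).image_sub_le_mul_sub_of_deriv_le hg hgd hslope
    0 (left_mem_Icc.2 zero_le_one) 1 (right_mem_Icc.2 zero_le_one) zero_le_one

theorem IsClosed.le_mul_dist_of_norm_fderiv_le {F : Set E} (hF : IsClosed F) {f : E → ℝ}
    {C : ℝ} {x y : E} (hx : x ∈ F) (hy : y ∉ F) (hf0 : ∀ z ∈ F, f z = 0)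
    (hcont : ContinuousOn f (segment ℝ x y))
    (hdiff : ∀ z ∈ segment ℝ x y \ F, DifferentiableAt ℝ f z)
    (hbound : ∀ z ∈ segment ℝ x y \ F, ‖fderiv ℝ f z‖ ≤ C) :
    f y ≤ C * dist x y := by
  have hcpt : IsCompact (segment ℝ x y) :=
    segment_eq_image_lineMap ℝ x y ▸ isCompact_Icc.image AffineMap.lineMap_continuous
  obtain ⟨w, ⟨hwxy, hwF⟩, hwmin⟩ := (hcpt.inter_right hF).exists_isMinOn
    ⟨x, left_mem_segment ℝ x y, hx⟩ (continuous_id.dist continuous_const).continuousOn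
  have hsub : segment ℝ w y ⊆ segment ℝ x y :=
    (convex_segment x y).segment_subset hwxy (right_mem_segment ℝ x y)
  have hopen : openSegment ℝ w y ⊆ segment ℝ x y \ F := by
    intro z hz
    refine ⟨hsub (openSegment_subset_segment ℝ w y hz), fun hzF => ?_⟩
    have hzw : z ≠ w := fun h =>
      ne_of_mem_of_not_mem hwF hy (left_mem_openSegment_iff.mp (h ▸ hz))
    have hsplit := dist_add_dist_of_mem_segment (openSegment_subset_segment ℝ w y hz)
    have hmin : dist w y ≤ dist z y := hwmin ⟨hsub (openSegment_subset_segment ℝ w y hz), hzF⟩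
    linarith [dist_pos.mpr hzw.symm]
  have hC : 0 ≤ C := (norm_nonneg _).trans (hbound y ⟨right_mem_segment ℝ x y, hy⟩)
  calc f y = f y - f w := by rw [hf0 w hwF, sub_zero]
    _ ≤ C * dist w y := sub_le_mul_dist_of_norm_fderiv_le_openSegment (hcont.mono hsub)
        (fun z hz => hdiff z (hopen hz)) (fun z hz => hbound z (hopen hz))
    _ ≤ C * dist x y := by
      gcongr
      linarith [dist_add_dist_of_mem_segment hwxy, dist_nonneg (x := x) (y := w)]

theorem Convex.exists_mem_segment_eq_of_eqOn_frontier {Ω : Set E} (hconv : Convex ℝ Ω)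
    (hopen : IsOpen Ω) {f : E → ℝ} {b c : ℝ} (hf : ContinuousOn f (closure Ω))
    (hfr : ∀ z ∈ frontier Ω, f z = b) {x y : E} (hx : x ∈ Ω) (hy : y ∉ Ω)
    (hxc : f x ≤ c) (hcb : c < b) : ∃ z ∈ Ω ∩ segment ℝ x y, f z = c := by
  obtain ⟨w, hwxy, hwfr⟩ := (convex_segment x y).isPreconnected.inter_frontier_nonempty
    ⟨x, left_mem_segment ℝ x y, hx⟩ ⟨y, right_mem_segment ℝ x y, hy⟩
  have hxw : segment ℝ x w ⊆ closure Ω :=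
    hconv.closure.segment_subset (subset_closure hx) (frontier_subset_closure hwfr)
  obtain ⟨z, hzxw, hzc⟩ := (convex_segment x w).isPreconnected.intermediate_value
    (left_mem_segment ℝ x w) (right_mem_segment ℝ x w) (hf.mono hxw)
    ⟨hxc, (hfr w hwfr).symm ▸ hcb.le⟩
  have hzΩ : z ∈ Ω := by
    rw [← hopen.interior_eq, ← closure_sdiff_frontier]
    exact ⟨hxw hzxw, fun hzfr => hcb.ne (hzc ▸ hfr z hzfr)⟩
  exact ⟨z, ⟨hzΩ, (convex_segment x y).segment_subset (left_mem_segment ℝ x y) hwxy hzxw⟩, hzc⟩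

theorem div_le_infDist_of_norm_fderiv_le {Ω D : Set E} {v : E → ℝ} {l ω : ℝ}
    (hconv : Convex ℝ Ω) (hopen : IsOpen Ω) (hbdd : IsBounded Ω) (hl : l ∈ Ioo (0 : ℝ) 1)
    (hω : 0 < ω) (hDcl : closure D ⊆ Ω) (hcont : ContinuousOn v (closure Ω))
    (hzero : ∀ x ∈ closure D, v x = 0) (hone : ∀ x ∈ frontier Ω, v x = 1)
    (hdiff : DifferentiableOn ℝ v (Ω \ closure D))
    (hbound : ∀ x ∈ Ω \ closure D, ‖fderiv ℝ v x‖ ≤ ω) :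
    ∀ x ∈ frontier D, l / ω ≤ infDist x {y | v y = l} := by
  intro x hx
  have hxD : x ∈ closure D := frontier_subset_closure hx
  have hxΩ : x ∈ Ω := hDcl hxD
  have hcross : ∀ y ∉ Ω, ∃ z ∈ Ω ∩ segment ℝ x y, v z = l := fun y hy =>
    hconv.exists_mem_segment_eq_of_eqOn_frontier hopen hcont hone hxΩ hy
      (hzero x hxD ▸ hl.1.le) hl.2
  have hinside : ∀ y ∈ Ω, v y = l → l ≤ ω * dist x y := by
    intro y hyΩ hyl
    have hseg : segment ℝ x y ⊆ Ω := hconv.segment_subset hxΩ hyΩ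
    have hyD : y ∉ closure D := fun h => hl.1.ne' (hyl ▸ hzero y h)
    exact hyl ▸ isClosed_closure.le_mul_dist_of_norm_fderiv_le hxD hyD hzero
      (hcont.mono (hseg.trans subset_closure))
      (fun z hz => hdiff.differentiableAt
        ((hopen.sdiff isClosed_closure).mem_nhds ⟨hseg hz.1, hz.2⟩))
      (fun z hz => hbound z ⟨hseg hz.1, hz.2⟩)
  have hlevel : ∀ y, v y = l → l ≤ ω * dist x y := by
    intro y hyl
    by_cases hyΩ : y ∈ Ω
    · exact hinside y hyΩ hyl
    · obtain ⟨z, ⟨hzΩ, hzxy⟩, hzl⟩ := hcross y hyΩ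
      calc l ≤ ω * dist x z := hinside z hzΩ hzl
        _ ≤ ω * dist x y := by
          gcongr
          linarith [dist_add_dist_of_mem_segment hzxy, dist_nonneg (x := z) (y := y)]
  have : Nontrivial E := nontrivial_of_mem_frontier hx
  obtain ⟨y₀, hy₀⟩ : ∃ y, y ∉ Ω := by
    by_contra! h
    exact NormedSpace.unbounded_univ ℝ E (eq_univ_of_forall h ▸ hbdd)
  obtain ⟨z₀, -, hz₀⟩ := hcross y₀ hy₀
  exact (le_infDist ⟨z₀, hz₀⟩).mpr fun y hy => (div_le_iff₀' hω).mpr (hlevel y hy)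

end NormedSpace

theorem le_bernoulliConst_of_mem_BClass {p l lam : ℝ} {Ω K : Set (Euc N)} (hlam : 0 < lam)
    (hK : K ∈ BClass p l lam Ω) : ENNReal.ofReal lam ≤ bernoulliConst p l Ω :=
  le_sSup ⟨lam, hlam, rfl, K, hK⟩

theorem gradient_bound_gives_supersolution_general
    (N : ℕ) (p : ℝ)
    (Ω : Set (Euc N)) (hconv : Convex ℝ Ω) (hopen : IsOpen Ω) (hbdd : IsBounded Ω)
    (l : ℝ) (hl : l ∈ Set.Ioo (0 : ℝ) 1) (ω : ℝ) (hω : 0 < ω)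
    (D : Set (Euc N)) (hDconv : Convex ℝ D) (hDopen : IsOpen D) (hDcl : closure D ⊆ Ω)
    (v : Euc N → ℝ) (hv : IsIntCapPotential p Ω D v)
    (hgrad : ∀ x ∈ Ω \ closure D, ‖gradient v x‖ ≤ ω) :
    (∀ x ∈ frontier D, l / ω ≤ infDist x {y | v y = l}) ∧
    D ∈ BClass p l (l / ω) Ω ∧
    ENNReal.ofReal (l / ω) ≤ bernoulliConst p l Ω := by
  have ⟨hcont, _, hzero, hone, hC1, _⟩ := hv
  have hfderiv : ∀ x ∈ Ω \ closure D, ‖fderiv ℝ v x‖ ≤ ω := fun x hx => by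
    rw [← toDual_gradient, LinearIsometryEquiv.norm_map]
    exact hgrad x hx
  have hdist := div_le_infDist_of_norm_fderiv_le hconv hopen hbdd hl hω hDcl hcont hzero hone
    (hC1.differentiableOn one_ne_zero) hfderiv
  have hB : D ∈ BClass p l (l / ω) Ω := ⟨hDconv, hDopen, hDcl, v, hv, hdist⟩
  exact ⟨hdist, hB, le_bernoulliConst_of_mem_BClass (div_pos hl.1 hω) hB⟩

/-- A gradient bound `‖∇v‖ ≤ ω` turns an interior capacitary potential into a supersolution
for the distance problem with `λ = l/ω`, bounding the Bernoulli constant from below. -/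
theorem gradient_bound_gives_supersolution
    (N : ℕ) (hN : 2 ≤ N) (p : ℝ) (hp : 1 < p)
    (Ω : Set (Euc N)) (hconv : Convex ℝ Ω) (hopen : IsOpen Ω) (hbdd : IsBounded Ω)
    (l : ℝ) (hl : l ∈ Set.Ioo (0 : ℝ) 1) (ω : ℝ) (hω : 0 < ω)
    (D : Set (Euc N)) (hDconv : Convex ℝ D) (hDopen : IsOpen D) (hDcl : closure D ⊆ Ω)
    (v : Euc N → ℝ) (hv : IsIntCapPotential p Ω D v)
    (hgrad : ∀ x ∈ Ω \ closure D, ‖gradient v x‖ ≤ ω) :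
    (∀ x ∈ frontier D, l / ω ≤ infDist x {y | v y = l}) ∧
    D ∈ BClass p l (l / ω) Ω ∧
    ENNReal.ofReal (l / ω) ≤ bernoulliConst p l Ω :=
  gradient_bound_gives_supersolution_general N p Ω hconv hopen hbdd l hl ω hω D hDconv hDopen hDcl v
    hv hgrad
end
end
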